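/- For the linearly oriented quiver A_n, suppose i+1 ≤ k ≤ j+1 ≤ l and Y is a non-trivial extension of E^{ij} by E^{kl}. Then Y ≅ E^{il} ⊕ E^{kj}, where E^{kj} is interpreted as the zero representation when k = j+1. -/

import Mathlib

open Classical

/-- A representation of a quiver (given by vertex type `ι`, arrow type `E`,
and source/target maps `s t : E → ι`) over a field `K`: a finite-dimensional
`K`-vector space at each vertex and a linear map along each arrow. -/
structure QRep (K : Type) [Field K] {ι : Type} {E : Type} (s t : E → ι) : Type 1 where
  V : ι → Type
  [addV : ∀ i, AddCommGroup (V i)]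
  [modV : ∀ i, Module K (V i)]
  [fdV : ∀ i, FiniteDimensional K (V i)]
  f : ∀ e : E, V (s e) →ₗ[K] V (t e)

attribute [instance] QRep.addV QRep.modV QRep.fdV

namespace QRep

variable {K : Type} [Field K] {ι E : Type} {s t : E → ι}

/-- A morphism of representations: linear maps at each vertex commuting with the arrow maps. -/
structure Hom (X Y : QRep K s t) : Type where
  φ : ∀ i, X.V i →ₗ[K] Y.V i
  comm : ∀ e, (Y.f e).comp (φ (s e)) = (φ (t e)).comp (X.f e)

def Hom.Surjective {X Y : QRep K s t} (f : Hom X Y) : Prop := ∀ i, Function.Surjective (f.φ i)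

def Hom.Injective {X Y : QRep K s t} (f : Hom X Y) : Prop := ∀ i, Function.Injective (f.φ i)

/-- Two representations are isomorphic if there is a morphism bijective at every vertex. -/
def Iso (X Y : QRep K s t) : Prop := ∃ f : Hom X Y, ∀ i, Function.Bijective (f.φ i)

/-- Direct sum of two representations, taken vertexwise. -/
def dsum (X Y : QRep K s t) : QRep K s t where
  V i := X.V i × Y.V i
  f e := (X.f e).prodMap (Y.f e)

instance : Module.Finite K PUnit :=
  Module.Finite.of_surjective (0 : K →ₗ[K] PUnit) (fun x => ⟨0, Subsingleton.elim _ _⟩)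

/-- The zero representation. -/
def zero : QRep K s t where
  V _ := PUnit
  f _ := 0

/-- A representation is zero if all its vector spaces are zero. -/
def IsZero (X : QRep K s t) : Prop := ∀ i, ∀ x : X.V i, x = 0

/-- Indecomposable: nonzero, and not isomorphic to a direct sum of two nonzero representations. -/
def Indec (X : QRep K s t) : Prop :=
  ¬ X.IsZero ∧ ∀ A B : QRep K s t, Iso X (A.dsum B) → A.IsZero ∨ B.IsZero

/-- Direct sum of a finite list of representations. -/
noncomputable def dsumList : List (QRep K s t) → QRep K s t
  | [] => zero
  | X :: L => X.dsum (dsumList L)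

/-- An extension `Y` of `Z` by `X`: an injective morphism `X → Y` and a surjective
morphism `Y → Z` whose vertexwise kernel is the image of `X`. -/
structure Extension (X Y Z : QRep K s t) : Type where
  incl : Hom X Y
  proj : Hom Y Z
  inj : ∀ i, Function.Injective (incl.φ i)
  surj : ∀ i, Function.Surjective (proj.φ i)
  exact : ∀ i, LinearMap.ker (proj.φ i) = LinearMap.range (incl.φ i)

/-- An extension is trivial (split) if there is a morphism `Y → X` restricting to the identity on `X`. -/
def Extension.Trivial {X Y Z : QRep K s t} (E : Extension X Y Z) : Prop :=
  ∃ r : Hom Y X, ∀ i x, r.φ i (E.incl.φ i x) = x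

/-- A subrepresentation of `Y`: a subspace at each vertex, stable under the arrow maps. -/
structure Sub (Y : QRep K s t) : Type where
  p : ∀ i, Submodule K (Y.V i)
  stable : ∀ e, ∀ x ∈ p (s e), Y.f e x ∈ p (t e)

def Sub.toRep {Y : QRep K s t} (S : Sub Y) : QRep K s t where
  V i := S.p i
  f e := (Y.f e).restrict (S.stable e)

/-- The quotient representation `Y/X`. -/
def Sub.quot {Y : QRep K s t} (S : Sub Y) : QRep K s t where
  V i := Y.V i ⧸ S.p i
  f e := Submodule.mapQ (S.p (s e)) (S.p (t e)) (Y.f e) (fun x hx => S.stable e x hx)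

/-- The inclusion morphism of a subrepresentation. -/
def Sub.incl {Y : QRep K s t} (S : Sub Y) : Hom S.toRep Y where
  φ i := (S.p i).subtype
  comm e := by ext x; rfl

/-- The quotient morphism onto the quotient representation. -/
def Sub.mkQ {Y : QRep K s t} (S : Sub Y) : Hom Y S.quot where
  φ i := (S.p i).mkQ
  comm e := by ext x; first | rfl | (simp only [LinearMap.comp_apply]; exact Submodule.mapQ_apply ..) | simp [Sub.quot, Submodule.mapQ_apply]

/-- The space of morphisms between two representations, as a subspace of the product of Hom spaces. -/
def HomSpace (X Y : QRep K s t) : Submodule K (∀ i, X.V i →ₗ[K] Y.V i) where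
  carrier := {φ | ∀ e, (Y.f e).comp (φ (s e)) = (φ (t e)).comp (X.f e)}
  add_mem' := by
    intro a b ha hb e
    simp only [Set.mem_setOf_eq] at ha hb
    simp [LinearMap.comp_add, LinearMap.add_comp, ha e, hb e]
  zero_mem' := by intro e; simp
  smul_mem' := by
    intro c a ha e
    simp only [Set.mem_setOf_eq] at ha
    simp [LinearMap.comp_smul, LinearMap.smul_comp, ha e]

end QRep
/-- The source of the `e`-th arrow of the linearly oriented quiver `Aₙ`
(vertices `0,…,n-1`, arrows `e → e+1` for `0 ≤ e < n-1`; 0-based indexing). -/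
def ASrc (n : ℕ) (e : Fin (n - 1)) : Fin n := ⟨e.val, by have := e.isLt; omega⟩

/-- The target of the `e`-th arrow of `Aₙ`. -/
def ATgt (n : ℕ) (e : Fin (n - 1)) : Fin n := ⟨e.val + 1, by have := e.isLt; omega⟩

/-- Representations of the linearly oriented quiver `Aₙ`. -/
abbrev ARep (K : Type) [Field K] (n : ℕ) := QRep K (ASrc n) (ATgt n)

/-- The canonical map from `M` to a submodule `T`: the identity if `T = ⊤`, zero otherwise. -/
noncomputable def toSub {K M : Type} [Field K] [AddCommGroup M] [Module K M]
    (T : Submodule K M) : M →ₗ[K] T :=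
  if h : T = ⊤ then LinearMap.codRestrict T LinearMap.id (fun x => by simp [h]) else 0

/-- The vertex spaces of the interval representation `E^{ij}`: `K` for `i ≤ p ≤ j`, zero otherwise. -/
def ESub (K : Type) [Field K] (n i j : ℕ) (p : Fin n) : Submodule K K :=
  if i ≤ p.val ∧ p.val ≤ j then ⊤ else ⊥

/-- The interval representation `E^{ij}` of `Aₙ` (0-based): one-dimensional spaces at
vertices `i,…,j`, identity maps between consecutive ones, zero elsewhere. -/
noncomputable def Eij (K : Type) [Field K] (n i j : ℕ) : ARep K n where
  V p := ESub K n i j p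
  f e := (toSub (ESub K n i j (ATgt n e))).comp (ESub K n i j (ASrc n e)).subtype

/-- Direct sum of interval representations indexed by a list of pairs. -/
noncomputable def intervalSum (K : Type) [Field K] (n : ℕ) (L : List (ℕ × ℕ)) : ARep K n :=
  QRep.dsumList (L.map fun pr => Eij K n pr.1 pr.2)

/-!
Lift the generator of `E^{ij}` at vertex `i` to `Y` and transport it along the arrows, giving a
chain `y`. It leaves `E^{ij}` at vertex `j+1`, so there `y = c • x`, where `x` is the image of the
generating chain of `E^{kl}`. If `c = 0`, then `y` spans a copy of `E^{ij}` splitting the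
extension. Otherwise `y` spans a copy of `E^{il}` and `c • x - y`, which dies at `j+1`, a copy of
`E^{kj}`; at every vertex `x` and `y` span `Y`, and both sides have the same dimension there.
-/

namespace QRep

variable {K : Type} [Field K] {ι E : Type} {s t : E → ι}

theorem Iso.symm {X Z : QRep K s t} (h : Iso X Z) : Iso Z X := by
  obtain ⟨f, hf⟩ := h
  let e := fun i => LinearEquiv.ofBijective (f.φ i) (hf i)
  refine ⟨⟨fun i => (e i).symm.toLinearMap, fun a => ?_⟩, fun i => (e i).symm.bijective⟩
  ext z
  apply (e (t a)).injective
  have hcomm := LinearMap.congr_fun (f.comm a) ((e (s a)).symm z)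
  have he : ∀ i x, e i x = f.φ i x := fun _ _ => rfl
  simp only [LinearMap.comp_apply, LinearEquiv.coe_coe, ← he, LinearEquiv.apply_symm_apply]
    at hcomm ⊢
  exact hcomm.symm

def Hom.copair {X Z Y : QRep K s t} (F : Hom X Y) (G : Hom Z Y) : Hom (X.dsum Z) Y where
  φ i := (F.φ i).coprod (G.φ i)
  comm a := by
    refine LinearMap.ext fun ⟨x, z⟩ => ?_
    change Y.f a (F.φ _ x + G.φ _ z) = F.φ _ (X.f a x) + G.φ _ (Z.f a z)
    rw [map_add]
    exact congrArg₂ (· + ·) (LinearMap.congr_fun (F.comm a) x) (LinearMap.congr_fun (G.comm a) z)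

theorem finrank_dsum_V (X Z : QRep K s t) (i : ι) :
    Module.finrank K ((X.dsum Z).V i) = Module.finrank K (X.V i) + Module.finrank K (Z.V i) :=
  Module.finrank_prod

theorem Hom.iso_of_surjective {W Y : QRep K s t} (g : Hom W Y) (hg : g.Surjective)
    (hdim : ∀ i, Module.finrank K (W.V i) = Module.finrank K (Y.V i)) : Iso Y W :=
  Iso.symm ⟨g, fun i =>
    ⟨(LinearMap.injective_iff_surjective_of_finrank_eq_finrank (hdim i)).2 (hg i), hg i⟩⟩

theorem Hom.copair_apply {X Z Y : QRep K s t} (F : Hom X Y) (G : Hom Z Y) (i : ι) (x : X.V i)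
    (z : Z.V i) : (F.copair G).φ i (x, z) = F.φ i x + G.φ i z := rfl

namespace Extension

variable {X Y Z : QRep K s t} (ext : Extension X Y Z)

@[simp]
theorem proj_incl {i : ι} (x : X.V i) : ext.proj.φ i (ext.incl.φ i x) = 0 := by
  rw [← LinearMap.mem_ker, ext.exact]
  exact LinearMap.mem_range_self _ x

theorem exists_incl_eq_of_proj_eq_zero {i : ι} {w : Y.V i} (hw : ext.proj.φ i w = 0) :
    ∃ x, ext.incl.φ i x = w := by
  rw [← LinearMap.mem_range, ← ext.exact i]
  exact hw

include ext in
theorem eq_zero_of_forall_eq_zero {i : ι} (hX : ∀ x : X.V i, x = 0) (hZ : ∀ z : Z.V i, z = 0)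
    (w : Y.V i) : w = 0 := by
  obtain ⟨x, rfl⟩ := ext.exists_incl_eq_of_proj_eq_zero (hZ (ext.proj.φ i w))
  rw [hX x, map_zero]

include ext in
theorem finrank_V (i : ι) :
    Module.finrank K (Y.V i) = Module.finrank K (X.V i) + Module.finrank K (Z.V i) := by
  rw [← (ext.proj.φ i).finrank_range_add_finrank_ker, ext.exact,
    LinearMap.range_eq_top.2 (ext.surj i), finrank_top,
    LinearMap.finrank_range_of_inj (ext.inj i), add_comm]

theorem trivial_of_section (σ : Hom Z Y) (hσ : ∀ i z, ext.proj.φ i (σ.φ i z) = z) :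
    ext.Trivial := by
  let q : ∀ i, Y.V i →ₗ[K] Y.V i := fun i => LinearMap.id - σ.φ i ∘ₗ ext.proj.φ i
  have hq : ∀ i w, q i w ∈ LinearMap.range (ext.incl.φ i) := fun i w => by
    rw [← ext.exact, LinearMap.mem_ker]
    simp [q, hσ]
  let r : ∀ i, Y.V i →ₗ[K] X.V i := fun i =>
    (LinearEquiv.ofInjective _ (ext.inj i)).symm.toLinearMap ∘ₗ (q i).codRestrict _ (hq i)
  have hr : ∀ i w, ext.incl.φ i (r i w) = q i w := fun i w =>
    congrArg Subtype.val ((LinearEquiv.ofInjective _ (ext.inj i)).apply_symm_apply ⟨q i w, hq i w⟩)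
  have hq_comm : ∀ a w, Y.f a (q (s a) w) = q (t a) (Y.f a w) := fun a w => by
    have hσ_comm := LinearMap.congr_fun (σ.comm a) (ext.proj.φ (s a) w)
    have hπ_comm := LinearMap.congr_fun (ext.proj.comm a) w
    simp only [LinearMap.comp_apply] at hσ_comm hπ_comm
    simp only [q, LinearMap.sub_apply, LinearMap.id_apply, LinearMap.comp_apply, map_sub,
      hσ_comm, hπ_comm]
  refine ⟨⟨r, fun a => ?_⟩, fun i x => ext.inj i ?_⟩
  · refine LinearMap.ext fun w => ext.inj (t a) ?_
    have hincl_comm := LinearMap.congr_fun (ext.incl.comm a) (r (s a) w)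
    simp only [LinearMap.comp_apply] at hincl_comm ⊢
    rw [← hincl_comm, hr, hr, hq_comm]
  · rw [hr]
    simp [q]

end Extension

end QRep

@[simp]
theorem val_ASrc {n : ℕ} (e : Fin (n - 1)) : (ASrc n e).1 = e.1 := rfl

@[simp]
theorem val_ATgt {n : ℕ} (e : Fin (n - 1)) : (ATgt n e).1 = e.1 + 1 := rfl

namespace Eij

variable {K : Type} [Field K] {n a b : ℕ}

theorem eq_zero_of_notMem {p : Fin n} (hp : ¬(a ≤ p.1 ∧ p.1 ≤ b)) (x : (Eij K n a b).V p) :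
    x = 0 := by
  have hbot : ESub K n a b p = ⊥ := if_neg hp
  exact Subtype.ext ((Submodule.mem_bot K).1 (hbot ▸ x.2))

theorem val_f (e : Fin (n - 1)) (x : (Eij K n a b).V (ASrc n e)) :
    Subtype.val ((Eij K n a b).f e x) = if e.1 + 1 ≤ b then Subtype.val x else 0 := by
  by_cases he : a ≤ e.1 + 1 ∧ e.1 + 1 ≤ b
  · have htop : ESub K n a b (ATgt n e) = ⊤ := if_pos he
    simp only [Eij, toSub, htop, dif_pos, if_pos he.2]
    rfl
  · rw [Subtype.ext_iff.1 (eq_zero_of_notMem he ((Eij K n a b).f e x))]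
    split_ifs with hb
    · rw [eq_zero_of_notMem (show ¬(a ≤ e.1 ∧ e.1 ≤ b) by omega) x]
      rfl
    · rfl

noncomputable def unit (K : Type) [Field K] (n a b : ℕ) (p : Fin n) : (Eij K n a b).V p :=
  ⟨if a ≤ p.1 ∧ p.1 ≤ b then 1 else 0, by
    split_ifs with h
    · rw [show ESub K n a b p = ⊤ from if_pos h]; trivial
    · exact Submodule.zero_mem _⟩

theorem val_unit_of_mem {p : Fin n} (hp : a ≤ p.1 ∧ p.1 ≤ b) :
    Subtype.val (unit K n a b p) = 1 := if_pos hp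

theorem val_unit_of_notMem {p : Fin n} (hp : ¬(a ≤ p.1 ∧ p.1 ≤ b)) :
    Subtype.val (unit K n a b p) = 0 := if_neg hp

theorem eq_smul_unit {p : Fin n} (x : (Eij K n a b).V p) :
    x = Subtype.val x • unit K n a b p := by
  by_cases hp : a ≤ p.1 ∧ p.1 ≤ b
  · refine Subtype.ext ?_
    change Subtype.val x = Subtype.val x * Subtype.val (unit K n a b p)
    rw [val_unit_of_mem hp, mul_one]
  · rw [eq_zero_of_notMem hp x]
    exact (zero_smul K _).symm

theorem finrank_V (p : Fin n) :
    Module.finrank K ((Eij K n a b).V p) = if a ≤ p.1 ∧ p.1 ≤ b then 1 else 0 := by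
  change Module.finrank K (ESub K n a b p) = _
  by_cases hp : a ≤ p.1 ∧ p.1 ≤ b
  · rw [ESub, if_pos hp, if_pos hp, finrank_top, Module.finrank_self]
  · rw [ESub, if_neg hp, if_neg hp, finrank_bot]

end Eij

namespace ARep

variable {K : Type} [Field K] {n : ℕ}

def chains (Y : ARep K n) (a : ℕ) : Submodule K (∀ p, Y.V p) where
  carrier := {w | ∀ e : Fin (n - 1), a ≤ e.1 → Y.f e (w (ASrc n e)) = w (ATgt n e)}
  add_mem' {v w} hv hw e he := by
    simp only [Pi.add_apply, map_add, hv e he, hw e he]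
  zero_mem' e _ := map_zero _
  smul_mem' c w hw e he := by
    simp only [Pi.smul_apply, map_smul, hw e he]

theorem chains_mono {Y : ARep K n} {a b : ℕ} (hab : a ≤ b) : chains Y a ≤ chains Y b :=
  fun _ hw e he => hw e (hab.trans he)

theorem eq_zero_of_mem_chains {Y : ARep K n} {a : ℕ} {w : ∀ p, Y.V p} (hw : w ∈ chains Y a)
    (ha : a < n) (h0 : w ⟨a, ha⟩ = 0) (p : Fin n) (hp : a ≤ p.1) : w p = 0 := by
  suffices h : ∀ m, a ≤ m → ∀ hm : m < n, w ⟨m, hm⟩ = 0 from h p.1 hp p.2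
  intro m ham
  induction m, ham using Nat.le_induction with
  | base => exact fun _ => h0
  | succ m ham ih =>
    intro hm
    refine (hw ⟨m, by omega⟩ ham).symm.trans ?_
    exact (congrArg (Y.f _) (ih (by omega))).trans (map_zero _)

theorem map_mem_chains {X Y : ARep K n} (F : QRep.Hom X Y) {a : ℕ} {w : ∀ p, X.V p}
    (hw : w ∈ chains X a) : (fun p => F.φ p (w p)) ∈ chains Y a := fun e he => by
  change Y.f e (F.φ _ (w (ASrc n e))) = F.φ _ (w (ATgt n e))
  rw [← hw e he]
  exact LinearMap.congr_fun (F.comm e) _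

theorem _root_.Eij.unit_mem_chains {a b : ℕ} : Eij.unit K n a b ∈ chains (Eij K n a b) a :=
  fun e he => Subtype.ext <| by
    rw [Eij.val_f]
    by_cases heb : e.1 + 1 ≤ b
    · rw [if_pos heb, Eij.val_unit_of_mem (p := ASrc n e) ⟨he, by rw [val_ASrc]; omega⟩,
        Eij.val_unit_of_mem (p := ATgt n e) ⟨by rw [val_ATgt]; omega, heb⟩]
    · rw [if_neg heb, Eij.val_unit_of_notMem (p := ATgt n e) (by rw [val_ATgt]; omega)]

noncomputable def propagate (Y : ARep K n) (a : ℕ) (w : ∀ p, Y.V p) :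
    ∀ m, (h : m < n) → Y.V ⟨m, h⟩
  | 0, h => w ⟨0, h⟩
  | m + 1, h =>
    if m + 1 ≤ a then w ⟨m + 1, h⟩ else Y.f ⟨m, by omega⟩ (propagate Y a w m (by omega))

theorem propagate_succ (Y : ARep K n) {a : ℕ} (w : ∀ p, Y.V p) {m : ℕ} (ham : a ≤ m)
    (hm : m + 1 < n) :
    propagate Y a w (m + 1) hm = Y.f ⟨m, by omega⟩ (propagate Y a w m (by omega)) :=
  if_neg (by omega)

theorem exists_mem_chains_eq_of_le (Y : ARep K n) (a : ℕ) (w : ∀ p, Y.V p) :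
    ∃ v ∈ chains Y a, ∀ p : Fin n, p.1 ≤ a → v p = w p := by
  refine ⟨fun p => propagate Y a w p.1 p.2, fun e he => ?_, fun ⟨m, hm⟩ hma => ?_⟩
  · exact (propagate_succ Y w he (by have := e.2; omega)).symm
  · cases m with
    | zero => rfl
    | succ m => exact if_pos hma

def homOfChain {Y : ARep K n} {a b : ℕ} (w : ∀ p, Y.V p) (hw : w ∈ chains Y a)
    (hb : ∀ h : b + 1 < n, w ⟨b + 1, h⟩ = 0) : QRep.Hom (Eij K n a b) Y where
  φ p := (ESub K n a b p).subtype.smulRight (w p)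
  comm e := LinearMap.ext fun x => by
    change Y.f e (Subtype.val x • w (ASrc n e)) = Subtype.val ((Eij K n a b).f e x) • w (ATgt n e)
    by_cases hx : a ≤ e.1 ∧ e.1 ≤ b
    · rw [map_smul, hw e hx.1, Eij.val_f]
      split_ifs with heb
      · rfl
      · have hbn : b + 1 < n := by have := e.2; omega
        have he : ATgt n e = ⟨b + 1, hbn⟩ := Fin.ext (by simp only [val_ATgt]; omega)
        rw [he, hb hbn, smul_zero, smul_zero]
    · obtain rfl := Eij.eq_zero_of_notMem (p := ASrc n e) hx x
      rw [map_zero]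
      exact (congrArg _ (zero_smul K _)).trans ((map_zero _).trans (zero_smul K _).symm)

theorem homOfChain_apply {Y : ARep K n} {a b : ℕ} {w : ∀ p, Y.V p} (hw : w ∈ chains Y a)
    (hb : ∀ h : b + 1 < n, w ⟨b + 1, h⟩ = 0) (p : Fin n) (x : (Eij K n a b).V p) :
    (homOfChain w hw hb).φ p x = Subtype.val x • w p := rfl

end ARep

namespace QRep.Extension

open ARep

variable {K : Type} [Field K] {n i j k l : ℕ} {Y : ARep K n}
  (ext : Extension (Eij K n k l) Y (Eij K n i j))

theorem exists_chain_lifting_unit :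
    ∃ y ∈ chains Y i, ∀ p, ext.proj.φ p (y p) = Eij.unit K n i j p := by
  choose w hw using fun p => ext.surj p (Eij.unit K n i j p)
  obtain ⟨y, hy, hyw⟩ := exists_mem_chains_eq_of_le Y i w
  refine ⟨y, hy, fun p => ?_⟩
  by_cases hpi : p.1 ≤ i
  · rw [hyw p hpi, hw]
  · have hπy : (fun p => ext.proj.φ p (y p)) - Eij.unit K n i j ∈ chains (Eij K n i j) i :=
      sub_mem (map_mem_chains ext.proj hy) Eij.unit_mem_chains
    refine sub_eq_zero.1 (eq_zero_of_mem_chains hπy (by omega) ?_ p (by omega))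
    rw [Pi.sub_apply, hyw _ le_rfl, hw, sub_self]

include ext in
theorem eq_zero_of_notMem (hik : i ≤ k) (hjl : j ≤ l) {p : Fin n} (hp : ¬(i ≤ p.1 ∧ p.1 ≤ l))
    (w : Y.V p) : w = 0 :=
  ext.eq_zero_of_forall_eq_zero (Eij.eq_zero_of_notMem (by omega))
    (Eij.eq_zero_of_notMem (by omega)) w

theorem exists_eq_smul_incl_unit {p : Fin n} {w : Y.V p} (hw : ext.proj.φ p w = 0) :
    ∃ c : K, w = c • ext.incl.φ p (Eij.unit K n k l p) := by
  obtain ⟨x, rfl⟩ := ext.exists_incl_eq_of_proj_eq_zero hw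
  exact ⟨Subtype.val x, by rw [← map_smul, ← Eij.eq_smul_unit]⟩

theorem trivial_of_lift_vanishing {y : ∀ p, Y.V p} (hy : y ∈ chains Y i)
    (hπy : ∀ p, ext.proj.φ p (y p) = Eij.unit K n i j p)
    (hy0 : ∀ h : j + 1 < n, y ⟨j + 1, h⟩ = 0) :
    ext.Trivial :=
  ext.trivial_of_section (homOfChain y hy hy0) fun p x => by
    rw [homOfChain_apply, map_smul, hπy, ← Eij.eq_smul_unit]

theorem span_incl_unit_lift_eq_top {p : Fin n} {v : Y.V p}
    (hv : ext.proj.φ p v = Eij.unit K n i j p) :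
    Submodule.span K {ext.incl.φ p (Eij.unit K n k l p), v} = ⊤ := by
  refine eq_top_iff.2 fun w _ => Submodule.mem_span_pair.2 ?_
  obtain ⟨α, hα⟩ := ext.exists_eq_smul_incl_unit
    (w := w - Subtype.val (ext.proj.φ p w) • v) (by
      rw [map_sub, map_smul, hv, ← Eij.eq_smul_unit, sub_self])
  exact ⟨α, Subtype.val (ext.proj.φ p w), by rw [← hα, sub_add_cancel]⟩

include ext in
theorem finrank_dsum_eq (hik : i ≤ k) (hkj : k ≤ j + 1) (hjl : j ≤ l) (p : Fin n) :
    Module.finrank K (((Eij K n i l).dsum (Eij K n k j)).V p) = Module.finrank K (Y.V p) := by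
  rw [finrank_dsum_V, ext.finrank_V, Eij.finrank_V, Eij.finrank_V, Eij.finrank_V,
    Eij.finrank_V]
  split_ifs <;> omega

theorem iso_dsum_of_lift (hik : i ≤ k) (hkj : k ≤ j + 1) (hjl : j + 1 ≤ l) (hl : l < n)
    {y : ∀ p, Y.V p} (hy : y ∈ chains Y i) (hπy : ∀ p, ext.proj.φ p (y p) = Eij.unit K n i j p)
    {c : K} (hc : c ≠ 0)
    (hyc : y ⟨j + 1, by omega⟩ = c • ext.incl.φ _ (Eij.unit K n k l ⟨j + 1, by omega⟩)) :
    Iso Y ((Eij K n i l).dsum (Eij K n k j)) := by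
  set x : ∀ p, Y.V p := fun p => ext.incl.φ p (Eij.unit K n k l p)
  have hx : x ∈ chains Y k := map_mem_chains ext.incl Eij.unit_mem_chains
  have hz : c • x - y ∈ chains Y k := sub_mem (Submodule.smul_mem _ c hx) (chains_mono hik hy)
  have hz0 : ∀ p : Fin n, j + 1 ≤ p.1 → c • x p - y p = 0 :=
    eq_zero_of_mem_chains (chains_mono hkj hz) (by omega) (by simp [x, hyc])
  have hyl : ∀ h : l + 1 < n, y ⟨l + 1, h⟩ = 0 := fun _ =>
    ext.eq_zero_of_notMem hik (by omega) (by simp) _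
  let g := (homOfChain y hy hyl).copair (homOfChain (c • x - y) hz fun _ => hz0 _ le_rfl)
  refine g.iso_of_surjective (fun p => ?_) (ext.finrank_dsum_eq hik hkj (by omega))
  have hy_mem : y p ∈ LinearMap.range (g.φ p) := by
    by_cases hp : i ≤ p.1 ∧ p.1 ≤ l
    · refine ⟨(Eij.unit K n i l p, 0), ?_⟩
      rw [Hom.copair_apply, map_zero, add_zero, homOfChain_apply, Eij.val_unit_of_mem hp,
        one_smul]
    · rw [ext.eq_zero_of_notMem hik (by omega) hp (y p)]
      exact Submodule.zero_mem _
  have hz_mem : k ≤ p.1 → c • x p - y p ∈ LinearMap.range (g.φ p) := fun hkp => by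
    by_cases hpj : p.1 ≤ j
    · refine ⟨(0, Eij.unit K n k j p), ?_⟩
      rw [Hom.copair_apply, map_zero, zero_add, homOfChain_apply, Eij.val_unit_of_mem ⟨hkp, hpj⟩,
        one_smul, Pi.sub_apply, Pi.smul_apply]
    · rw [hz0 p (by omega)]
      exact Submodule.zero_mem _
  have hx_mem : x p ∈ LinearMap.range (g.φ p) := by
    by_cases hkp : k ≤ p.1
    · have hcx := Submodule.add_mem _ hy_mem (hz_mem hkp)
      rw [add_sub_cancel] at hcx
      simpa [hc] using Submodule.smul_mem _ c⁻¹ hcx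
    · have hx0 : x p = 0 := by
        change ext.incl.φ p (Eij.unit K n k l p) = 0
        rw [Eij.eq_zero_of_notMem (fun h => hkp h.1) (Eij.unit K n k l p), map_zero]
      rw [hx0]
      exact Submodule.zero_mem _
  rw [← LinearMap.range_eq_top, eq_top_iff, ← ext.span_incl_unit_lift_eq_top (hπy p),
    Submodule.span_le, Set.insert_subset_iff, Set.singleton_subset_iff]
  exact ⟨hx_mem, hy_mem⟩

end QRep.Extension

theorem stmt7_general (K : Type) [Field K] (n i j k l : ℕ)
    (hl : l < n)
    (h1 : i + 1 ≤ k) (h2 : k ≤ j + 1) (h3 : j + 1 ≤ l)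
    (Y : ARep K n) (ext : QRep.Extension (Eij K n k l) Y (Eij K n i j))
    (hnt : ¬ ext.Trivial) :
    QRep.Iso Y (QRep.dsum (Eij K n i l) (Eij K n k j)) := by
  obtain ⟨y, hy, hπy⟩ := ext.exists_chain_lifting_unit
  obtain ⟨c, hc⟩ := ext.exists_eq_smul_incl_unit (p := ⟨j + 1, by omega⟩) (w := y _) <| by
    rw [hπy]
    exact Eij.eq_zero_of_notMem (by simp) _
  have hc0 : c ≠ 0 := by
    rintro rfl
    exact hnt (ext.trivial_of_lift_vanishing hy hπy fun _ => by rw [hc, zero_smul])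
  exact ext.iso_dsum_of_lift (by omega) h2 h3 hl hy hπy hc0 hc

/-- if `i+1 ≤ k ≤ j+1 ≤ l` and `Y` is a non-trivial extension of `E^{ij}` by
`E^{kl}`, then `Y ≅ E^{il} ⊕ E^{kj}` (where `E^{kj}` is the zero representation when
`k = j+1`, as is automatic for our `Eij` when `k > j`). -/
theorem stmt7 (K : Type) [Field K] (n i j k l : ℕ)
    (hij : i ≤ j) (hkl : k ≤ l) (hl : l < n)
    (h1 : i + 1 ≤ k) (h2 : k ≤ j + 1) (h3 : j + 1 ≤ l)
    (Y : ARep K n) (ext : QRep.Extension (Eij K n k l) Y (Eij K n i j))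
    (hnt : ¬ ext.Trivial) :
    QRep.Iso Y (QRep.dsum (Eij K n i l) (Eij K n k j)) :=
  stmt7_general K n i j k l hl h1 h2 h3 Y ext hnt
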